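/- Let M be a 3-connected matroid and let e ∈ E(M). Then si(M/e) is not 3-connected if and only if M has a vertical 3-separation (X, {e}, Y). -/

import Mathlib

/-!
Write `M' = M ／ e`. Since `e` is not a loop, `r_{M'}(Z) = r(Z ∪ e) - 1`, so for a partition
`(X, {e}, Y)` of `E(M)` we get `λ_M(X) = λ_{M'}(X) + 1 - (r(X ∪ e) - r(X))`.
Simplifying neither creates nor destroys vertical `k`-separations with `k ≤ 2`: close up a
separation of `si(M')` in `M'`, or intersect one of `M'` with the set of representatives.
So `si(M')` fails to be 3-connected iff `M'` has a vertical `k`-separation `(X, Y)` with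
`k ≤ 2`, and 3-connectivity of `M` forces `k = 2` and `e ∈ cl(X) ∩ cl(Y)` (otherwise `X` or
`Y` would give a 1- or 2-separation of `M`), which is a vertical 3-separation `(X, {e}, Y)`.
-/

open Matroid Set

namespace DetPairs

variable {α : Type*}

/-- The rank of a set in a matroid: the maximum size of an independent subset
(as an integer, for convenient arithmetic). -/
noncomputable def r (M : Matroid α) (X : Set α) : ℤ :=
  ((sSup (Set.ncard '' {I | M.Indep I ∧ I ⊆ X}) : ℕ) : ℤ)

/-- The connectivity function `λ_M(X) = r(X) + r(E − X) − r(M)`. -/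
noncomputable def lam (M : Matroid α) (X : Set α) : ℤ :=
  r M X + r M (M.E \ X) - r M M.E

/-- Local connectivity `⊓(X,Y) = r(X) + r(Y) − r(X ∪ Y)`. -/
noncomputable def localConn (M : Matroid α) (X Y : Set α) : ℤ :=
  r M X + r M Y - r M (X ∪ Y)

/-- A circuit: a minimal dependent set. -/
def Circuit (M : Matroid α) (C : Set α) : Prop :=
  C ⊆ M.E ∧ ¬ M.Indep C ∧ ∀ D, D ⊂ C → M.Indep D

/-- A cocircuit: a circuit of the dual. -/
def Cocircuit (M : Matroid α) (C : Set α) : Prop := Circuit M✶ C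

/-- A triangle: a 3-element circuit. -/
def Triangle (M : Matroid α) (T : Set α) : Prop := Circuit M T ∧ T.ncard = 3

/-- A triad: a 3-element cocircuit. -/
def Triad (M : Matroid α) (T : Set α) : Prop := Cocircuit M T ∧ T.ncard = 3

/-- A quad: a 4-element set that is both a circuit and a cocircuit. -/
def Quad (M : Matroid α) (Q : Set α) : Prop :=
  Circuit M Q ∧ Cocircuit M Q ∧ Q.ncard = 4

/-- Deletion of a set of elements. -/
def Del (M : Matroid α) (D : Set α) : Matroid α := M ↾ (M.E \ D)

/-- Contraction of a set of elements. -/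
def Con (M : Matroid α) (C : Set α) : Matroid α := (M✶ ↾ (M.E \ C))✶

/-- `M` is 3-connected: it has no `k`-separation for `k = 1, 2`, where a
`k`-separation is a set `X` with `λ(X) = k − 1`, `|X| ≥ k` and `|E − X| ≥ k`. -/
def ThreeConnected (M : Matroid α) : Prop :=
  ∀ k : ℕ, 0 < k → k < 3 → ∀ X ⊆ M.E,
    ¬ (lam M X = (k : ℤ) - 1 ∧ (k : ℤ) ≤ X.ncard ∧ (k : ℤ) ≤ (M.E \ X).ncard)

/-- A detachable pair: distinct elements `e, f` such that `M \ e \ f` or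
`M / e / f` is 3-connected. -/
def DetachablePair (M : Matroid α) (e f : α) : Prop :=
  e ≠ f ∧ e ∈ M.E ∧ f ∈ M.E ∧
    (ThreeConnected (Del M {e, f}) ∨ ThreeConnected (Con M {e, f}))

/-- The triple of elements with indices `i, i+1, i+2` in an ordering. -/
def tri (e : ℕ → α) (i : ℕ) : Set α := {e i, e (i + 1), e (i + 2)}

/-- `(e 0, …, e (n-1))` is a fan ordering of length `n ≥ 3` in `M`:
consecutive triples alternate between triangles and triads. -/
def FanOrd (M : Matroid α) (n : ℕ) (e : ℕ → α) : Prop :=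
  3 ≤ n ∧ Set.InjOn e (Set.Iio n) ∧ (∀ i < n, e i ∈ M.E) ∧
    (Triangle M (tri e 0) ∨ Triad M (tri e 0)) ∧
    ∀ i, i + 3 < n →
      (Triangle M (tri e i) → Triad M (tri e (i + 1))) ∧
      (Triad M (tri e i) → Triangle M (tri e (i + 1)))

/-- A fan (as a set): either a 2-element subset of the ground set, or the
underlying set of a fan ordering of length at least 3. -/
def IsFan (M : Matroid α) (F : Set α) : Prop :=
  (F ⊆ M.E ∧ F.ncard = 2) ∨ ∃ n e, FanOrd M n e ∧ F = e '' Set.Iio n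

/-- A maximal fan: a fan contained in no strictly larger fan. -/
def MaximalFan (M : Matroid α) (F : Set α) : Prop :=
  IsFan M F ∧ ∀ F', IsFan M F' → F ⊆ F' → F' = F

/-- `M` is a wheel or a whirl: its ground set has a cyclic ordering of even size
`2n` in which consecutive triples alternate between triangles and triads. -/
def IsWheelOrWhirl (M : Matroid α) : Prop :=
  ∃ (n : ℕ) (e : ℕ → α), 2 ≤ n ∧ Set.InjOn e (Set.Iio (2 * n)) ∧
    M.E = e '' Set.Iio (2 * n) ∧
    ∀ i < 2 * n,
      (i % 2 = 0 → Triangle M {e i, e ((i + 1) % (2 * n)), e ((i + 2) % (2 * n))}) ∧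
      (i % 2 = 1 → Triad M {e i, e ((i + 1) % (2 * n)), e ((i + 2) % (2 * n))})

/-- An `M(K₄)`-separator: a 6-element set `{a,b,c,x,y,z}` where `{x,y,z}` is a
triad and `{a,b,c}`, `{a,x,y}`, `{b,x,z}`, `{c,y,z}` are triangles. -/
def MK4Sep (M : Matroid α) (S : Set α) : Prop :=
  ∃ a b c x y z : α, S = {a, b, c, x, y, z} ∧ S.ncard = 6 ∧
    Triad M {x, y, z} ∧ Triangle M {a, b, c} ∧ Triangle M {a, x, y} ∧
    Triangle M {b, x, z} ∧ Triangle M {c, y, z}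

/-- A vertical 3-separation `(X, {e}, Y)` of `M`. -/
def VertThreeSep (M : Matroid α) (X : Set α) (e : α) (Y : Set α) : Prop :=
  X ∪ {e} ∪ Y = M.E ∧ Disjoint X Y ∧ e ∉ X ∧ e ∉ Y ∧
    lam M X = 2 ∧ lam M Y = 2 ∧ e ∈ M.closure X ∧ e ∈ M.closure Y ∧
    3 ≤ r M X ∧ 3 ≤ r M Y

/-- `N` is a simplification of `M`: a restriction of `M` to a set of
representatives, one from each parallel class of nonloops. -/
def SimplificationOf (M N : Matroid α) : Prop :=
  ∃ X : Set α, (∀ x ∈ X, x ∈ M.E ∧ x ∉ M.closure ∅) ∧ N = M ↾ X ∧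
    ∀ y ∈ M.E, y ∉ M.closure ∅ →
      ∃! x, x ∈ X ∧ M.closure {y} = M.closure {x}

section Rank

variable {M : Matroid α} {X Y Z I : Set α} {e : α}

lemma r_restrict (M : Matroid α) (R X : Set α) : r (M ↾ R) X = r M (X ∩ R) := by
  simp only [r, restrict_indep_iff, subset_inter_iff, and_assoc, and_comm (a := _ ⊆ R)]

lemma r_nonneg (M : Matroid α) (X : Set α) : 0 ≤ r M X := Int.natCast_nonneg _

variable [M.Finite]

lemma r_eq_toNat_eRk (M : Matroid α) [M.Finite] (X : Set α) : r M X = (M.eRk X).toNat := by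
  obtain ⟨I, hI⟩ := M.exists_isBasis' X
  have hIfin : I.Finite := M.ground_finite.subset hI.indep.subset_ground
  have hmax : IsGreatest (Set.ncard '' {J | M.Indep J ∧ J ⊆ X}) I.ncard := by
    refine ⟨⟨I, ⟨hI.indep, hI.subset⟩, rfl⟩, ?_⟩
    rintro _ ⟨J, ⟨hJ, hJX⟩, rfl⟩
    rw [ncard_def, ncard_def]
    exact ENat.toNat_le_toNat (hI.encard_eq_eRk ▸ hJ.encard_le_eRk_of_subset hJX)
      hIfin.encard_lt_top.ne
  rw [r, hmax.csSup_eq, ← hI.encard_eq_eRk, ncard_def]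

lemma eRk_ne_top (M : Matroid α) [M.Finite] (X : Set α) : M.eRk X ≠ ⊤ :=
  eRk_ne_top_iff.2 (M.isRkFinite_set X)

lemma r_mono (h : X ⊆ Y) : r M X ≤ r M Y := by
  simp only [r_eq_toNat_eRk]
  exact_mod_cast ENat.toNat_le_toNat (M.eRk_mono h) (eRk_ne_top M Y)

lemma r_union_le (M : Matroid α) [M.Finite] (X Y : Set α) : r M (X ∪ Y) ≤ r M X + r M Y := by
  simp only [r_eq_toNat_eRk]
  have h := ENat.toNat_le_toNat (M.eRk_union_le_eRk_add_eRk X Y)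
    (WithTop.add_ne_top.2 ⟨eRk_ne_top M X, eRk_ne_top M Y⟩)
  rw [ENat.toNat_add (eRk_ne_top M X) (eRk_ne_top M Y)] at h
  exact_mod_cast h

lemma r_insert_le (M : Matroid α) [M.Finite] (e : α) (X : Set α) :
    r M (insert e X) ≤ r M X + 1 := by
  simp only [r_eq_toNat_eRk]
  have h := ENat.toNat_le_toNat (M.eRk_insert_le_add_one e X)
    (WithTop.add_ne_top.2 ⟨eRk_ne_top M X, ENat.one_ne_top⟩)
  rw [ENat.toNat_add (eRk_ne_top M X) ENat.one_ne_top] at h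
  exact_mod_cast h

lemma r_closure (M : Matroid α) [M.Finite] (X : Set α) : r M (M.closure X) = r M X := by
  simp only [r_eq_toNat_eRk, eRk_closure_eq]

lemma r_le_ncard (hX : X.Finite) : r M X ≤ X.ncard := by
  rw [r_eq_toNat_eRk, ncard_def]
  exact_mod_cast ENat.toNat_le_toNat (M.eRk_le_encard X) hX.encard_lt_top.ne

lemma Indep.ncard_le_r (hI : M.Indep I) (hIX : I ⊆ X) : (I.ncard : ℤ) ≤ r M X := by
  rw [r_eq_toNat_eRk, ncard_def]
  exact_mod_cast ENat.toNat_le_toNat (hI.encard_le_eRk_of_subset hIX) (eRk_ne_top M X)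

lemma nonempty_of_r_pos (h : 0 < r M X) : X.Nonempty := by
  rw [nonempty_iff_ne_empty]
  rintro rfl
  have := r_le_ncard (M := M) finite_empty
  rw [ncard_empty] at this
  omega

lemma mem_closure_iff_r_insert (he : e ∈ M.E) :
    e ∈ M.closure X ↔ r M (insert e X) = r M X := by
  refine ⟨fun h => ?_, fun h => by_contra fun hX => ?_⟩
  · rw [← r_closure, closure_insert_eq_of_mem_closure h, r_closure]
  · rw [r_eq_toNat_eRk, r_eq_toNat_eRk, eRk_insert_eq_add_one ⟨he, hX⟩,
      ENat.toNat_add (eRk_ne_top M X) ENat.one_ne_top] at h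
    simp at h

lemma r_contractElem (he : M.IsNonloop e) (hZ : Z ⊆ M.E \ {e}) :
    r (M ／ {e}) Z = r M (insert e Z) - 1 := by
  obtain ⟨J, hJ⟩ := (M ／ {e}).exists_isBasis Z (by rwa [contract_ground])
  have hJe : M.IsBasis (J ∪ {e}) (Z ∪ {e}) :=
    he.indep.union_isBasis_union_of_contract_isBasis hJ
  have heJ : e ∉ J := fun h => (hZ (hJ.subset h)).2 rfl
  have hJfin : J.Finite := M.ground_finite.subset (hJ.indep.of_contract.subset_ground)
  rw [r_eq_toNat_eRk, r_eq_toNat_eRk, ← hJ.encard_eq_eRk, ← union_singleton,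
    ← hJe.encard_eq_eRk, union_singleton, encard_insert_of_notMem heJ,
    ENat.toNat_add hJfin.encard_lt_top.ne ENat.one_ne_top]
  simp

lemma r_contractElem_le (he : M.IsNonloop e) (hX : X ⊆ M.E \ {e}) :
    r (M ／ {e}) X ≤ r M X := by
  linarith [r_contractElem he hX, r_insert_le M e X]

end Rank

section Connectivity

variable {M : Matroid α} {X : Set α} {e : α}

lemma lam_compl (hX : X ⊆ M.E) : lam M (M.E \ X) = lam M X := by
  unfold lam
  rw [sdiff_sdiff_cancel_left hX]
  ring

variable [M.Finite]

lemma lam_nonneg (hX : X ⊆ M.E) : 0 ≤ lam M X := by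
  have h := r_union_le M X (M.E \ X)
  rw [union_sdiff_cancel hX] at h
  unfold lam
  omega

lemma ThreeConnected.le_lam (hM : ThreeConnected M) (hX : X ⊆ M.E) {k : ℕ} (hk : k ≤ 2)
    (hkX : k ≤ X.ncard) (hkX' : k ≤ (M.E \ X).ncard) : (k : ℤ) ≤ lam M X := by
  obtain ⟨l, hl⟩ := Int.eq_ofNat_of_zero_le (lam_nonneg hX)
  by_contra! hlt
  exact hM (l + 1) (by omega) (by omega) X hX ⟨by omega, by omega, by omega⟩

lemma ThreeConnected.isNonloop (hM : ThreeConnected M) (he : e ∈ M.E)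
    (hE : (M.E \ {e}).Nonempty) : M.IsNonloop e := by
  refine isNonloop_of_not_isLoop he fun hl => ?_
  have hrE := (mem_closure_iff_r_insert he).1 (hl.mem_closure (M.E \ {e}))
  rw [insert_sdiff_singleton, insert_eq_of_mem he] at hrE
  have hre := (mem_closure_iff_r_insert he).1 (hl.mem_closure ∅)
  rw [insert_empty_eq] at hre
  have h0 := r_le_ncard (M := M) finite_empty
  have h1 := hM.le_lam (singleton_subset_iff.2 he) (k := 1) (by norm_num) (by simp)
    ((ncard_pos (M.ground_finite.sdiff)).2 hE)
  simp only [lam, ncard_empty] at h0 h1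
  have := r_nonneg M ∅
  omega

end Connectivity

/-- `X` is a vertical `k`-separation of `M` with `k = λ(X) + 1 ≤ 2`. -/
def IsVertSepBelowThree (M : Matroid α) (X : Set α) : Prop :=
  X ⊆ M.E ∧ lam M X ≤ 1 ∧ lam M X < r M X ∧ lam M X < r M (M.E \ X)

lemma IsVertSepBelowThree.compl {M : Matroid α} {X : Set α} (h : IsVertSepBelowThree M X) :
    IsVertSepBelowThree M (M.E \ X) := by
  obtain ⟨hXE, h1, h2, h3⟩ := h
  rw [← lam_compl hXE] at h1 h2 h3
  exact ⟨sdiff_subset, h1, h3, by rwa [sdiff_sdiff_cancel_left hXE]⟩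

lemma IsVertSepBelowThree.not_threeConnected {M : Matroid α} [M.Finite] {X : Set α}
    (h : IsVertSepBelowThree M X) : ¬ ThreeConnected M := by
  obtain ⟨hX, h1, hrX, hrX'⟩ := h
  obtain ⟨l, hl⟩ := Int.eq_ofNat_of_zero_le (lam_nonneg hX)
  have hcX := r_le_ncard (M := M) (M.ground_finite.subset hX)
  have hcX' := r_le_ncard (M := M) (M.ground_finite.sdiff (t := X))
  intro hM
  have := hM.le_lam hX (k := l + 1) (by omega) (by omega) (by omega)
  omega

lemma IsVertSepBelowThree.nonempty {M : Matroid α} [M.Finite] {X : Set α}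
    (h : IsVertSepBelowThree M X) : X.Nonempty :=
  nonempty_of_r_pos (by linarith [lam_nonneg h.1, h.2.2.1])

namespace SimplificationOf

variable {M N : Matroid α} {A W : Set α} {x y z : α}

lemma eq_restrict (h : SimplificationOf M N) : N = M ↾ N.E := by
  obtain ⟨S, -, rfl, -⟩ := h
  rfl

lemma isNonloop (h : SimplificationOf M N) (hx : x ∈ N.E) : M.IsNonloop x := by
  obtain ⟨S, hS, rfl, -⟩ := h
  exact isNonloop_iff_mem_compl_loops.2 (hS x hx)

lemma ground_subset (h : SimplificationOf M N) : N.E ⊆ M.E :=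
  fun _ hx => (h.isNonloop hx).mem_ground

lemma exists_mem_closure_singleton (h : SimplificationOf M N) (hz : M.IsNonloop z) :
    ∃ x ∈ N.E, z ∈ M.closure {x} := by
  obtain ⟨S, -, rfl, hS⟩ := h
  obtain ⟨x, ⟨hxS, hcl⟩, -⟩ := hS z hz.mem_ground (isNonloop_iff_mem_compl_loops.1 hz).2
  exact ⟨x, hxS, hcl ▸ M.mem_closure_self z hz.mem_ground⟩

lemma eq_of_mem_closure_singleton (h : SimplificationOf M N) (hx : x ∈ N.E) (hy : y ∈ N.E)
    (hxy : x ∈ M.closure {y}) : x = y := by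
  have hxn := h.isNonloop hx
  have hcl := hxn.closure_eq_of_mem_closure hxy
  obtain ⟨S, -, rfl, hS⟩ := h
  exact (hS x hxn.mem_ground (isNonloop_iff_mem_compl_loops.1 hxn).2).unique
    ⟨hx, rfl⟩ ⟨hy, hcl⟩

lemma subset_closure_inter_closure (h : SimplificationOf M N) (hW : W ⊆ M.E) :
    W ⊆ M.closure (N.E ∩ M.closure W) := by
  intro z hz
  obtain hzl | hzn := M.isLoop_or_isNonloop z (hW hz)
  · exact hzl.mem_closure _
  obtain ⟨x, hx, hzx⟩ := h.exists_mem_closure_singleton hzn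
  have hxW : x ∈ M.closure W :=
    M.closure_subset_closure (singleton_subset_iff.2 hz) (hzn.mem_closure_singleton hzx)
  exact M.closure_subset_closure (singleton_subset_iff.2 (mem_inter hx hxW)) hzx

lemma sdiff_closure_subset_closure_sdiff (h : SimplificationOf M N) (A : Set α) :
    M.E \ M.closure A ⊆ M.closure (N.E \ A) := by
  rintro z ⟨hzE, hzA⟩
  obtain ⟨x, hx, hzx⟩ := h.exists_mem_closure_singleton (isNonloop_of_notMem_closure hzA hzE)
  have hxA : x ∉ A := fun hxA => hzA (M.closure_subset_closure (singleton_subset_iff.2 hxA) hzx)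
  exact M.closure_subset_closure (singleton_subset_iff.2 (mem_sdiff_of_mem hx hxA)) hzx

lemma r_eq (h : SimplificationOf M N) (hA : A ⊆ N.E) : r N A = r M A := by
  rw [h.eq_restrict, r_restrict, inter_eq_self_of_subset_left hA]

variable [M.Finite]

lemma finite (h : SimplificationOf M N) : N.Finite :=
  ⟨M.ground_finite.subset h.ground_subset⟩

lemma r_inter_closure (h : SimplificationOf M N) (hW : W ⊆ M.E) :
    r M (N.E ∩ M.closure W) = r M W :=
  le_antisymm ((r_mono inter_subset_right).trans_eq (r_closure M W))
    ((r_mono (h.subset_closure_inter_closure hW)).trans_eq (r_closure M _))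

lemma r_ground (h : SimplificationOf M N) : r N N.E = r M M.E := by
  rw [h.r_eq Subset.rfl, ← h.r_inter_closure Subset.rfl, closure_ground,
    inter_eq_self_of_subset_left h.ground_subset]

lemma indep_of_ncard_le_two (h : SimplificationOf M N) (hA : A ⊆ N.E) (hA2 : A.ncard ≤ 2) :
    M.Indep A := by
  have hfin : A.Finite := M.ground_finite.subset (hA.trans h.ground_subset)
  obtain h0 | h1 | h2 : A.ncard = 0 ∨ A.ncard = 1 ∨ A.ncard = 2 := by omega
  · rw [(ncard_eq_zero hfin).1 h0]
    exact M.empty_indep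
  · obtain ⟨a, rfl⟩ := ncard_eq_one.1 h1
    exact indep_singleton.2 (h.isNonloop (hA rfl))
  · obtain ⟨a, b, hab, rfl⟩ := ncard_eq_two.1 h2
    have ha : a ∈ N.E := hA (mem_insert a {b})
    have hb : b ∈ N.E := hA (mem_insert_of_mem a rfl)
    refine ((indep_singleton.2 (h.isNonloop hb)).insert_indep_iff_of_notMem (by simpa)).2
      ⟨(h.isNonloop ha).mem_ground, fun hcl => hab (h.eq_of_mem_closure_singleton ha hb hcl)⟩

lemma le_r (h : SimplificationOf M N) (hA : A ⊆ N.E) {k : ℕ} (hk : k ≤ 2)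
    (hkA : k ≤ A.ncard) : (k : ℤ) ≤ r M A := by
  obtain ⟨t, htA, rfl⟩ := exists_subset_card_eq hkA
  exact Indep.ncard_le_r (h.indep_of_ncard_le_two (htA.trans hA) hk) htA

lemma exists_isVertSepBelowThree (h : SimplificationOf M N) (hN : ¬ ThreeConnected N) :
    ∃ A, IsVertSepBelowThree N A := by
  simp only [ThreeConnected, not_forall, not_not] at hN
  obtain ⟨k, hk0, hk3, A, hA, hlam, hkA, hkA'⟩ := hN
  have hrA := h.le_r hA (k := k) (by omega) (by exact_mod_cast hkA)
  have hrA' := h.le_r (A := N.E \ A) sdiff_subset (k := k) (by omega) (by exact_mod_cast hkA')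
  refine ⟨A, hA, by omega, ?_, ?_⟩
  · rw [h.r_eq hA]
    omega
  · rw [h.r_eq sdiff_subset]
    omega

lemma isVertSepBelowThree_closure (h : SimplificationOf M N) (hA : IsVertSepBelowThree N A) :
    IsVertSepBelowThree M (M.closure A) := by
  obtain ⟨hAN, hlam, hrA, hrA'⟩ := hA
  have hrB := (r_mono (h.sdiff_closure_subset_closure_sdiff A)).trans_eq (r_closure M _)
  simp only [lam, h.r_ground, h.r_eq hAN, h.r_eq (sdiff_subset : N.E \ A ⊆ N.E)] at hlam hrA hrA'
  refine ⟨M.closure_subset_ground A, ?_, ?_, ?_⟩ <;>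
    simp only [lam, r_closure] <;> omega

lemma isVertSepBelowThree_inter_closure (h : SimplificationOf M N)
    (hX : IsVertSepBelowThree M X) : IsVertSepBelowThree N (N.E ∩ M.closure X) := by
  obtain ⟨hXE, hlam, hrX, hrX'⟩ := hX
  have hB : N.E \ (N.E ∩ M.closure X) ⊆ M.E \ X := fun z hz =>
    ⟨h.ground_subset hz.1, fun hzX => hz.2 ⟨hz.1, M.subset_closure X hXE hzX⟩⟩
  have hrB := r_mono (M := M) hB
  simp only [lam] at hlam hrX hrX'
  refine ⟨inter_subset_left, ?_, ?_, ?_⟩ <;>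
    simp only [lam, h.r_ground, h.r_eq inter_subset_left, h.r_eq sdiff_subset,
      h.r_inter_closure hXE] <;> omega

end SimplificationOf

lemma exists_simplificationOf (M : Matroid α) : ∃ N, SimplificationOf M N := by
  obtain ⟨S, hS, hbij⟩ := exists_subset_bijOn {x | M.IsNonloop x} (fun x => M.closure {x})
  refine ⟨M ↾ S, S, fun x hx => isNonloop_iff_mem_compl_loops.1 (hS hx), rfl,
    fun y hyE hyl => ?_⟩
  obtain ⟨x, hx, hxy⟩ :=
    hbij.surjOn ⟨y, isNonloop_iff_mem_compl_loops.2 ⟨hyE, hyl⟩, rfl⟩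
  exact ⟨x, ⟨hx, hxy.symm⟩,
    fun x' ⟨hx', hx'y⟩ => hbij.injOn hx' hx (hx'y.symm.trans hxy.symm)⟩

section Contraction

variable {M : Matroid α} [M.Finite] {X Y : Set α} {e : α}

lemma lam_eq_lam_contractElem (he : M.IsNonloop e) (hX : X ⊆ M.E \ {e}) :
    lam M X = lam (M ／ {e}) X + 1 - (r M (insert e X) - r M X) := by
  have hcompl : insert e ((M.E \ {e}) \ X) = M.E \ X := by
    rw [sdiff_right_comm, insert_sdiff_singleton,
      insert_eq_of_mem (mem_sdiff_of_mem he.mem_ground fun h => (hX h).2 rfl)]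
  simp only [lam, contract_ground, r_contractElem he hX, r_contractElem he sdiff_subset,
    r_contractElem he Subset.rfl, hcompl, insert_sdiff_singleton, insert_eq_of_mem he.mem_ground]
  ring

lemma IsVertSepBelowThree.mem_closure_of_contractElem (hM : ThreeConnected M)
    (he : M.IsNonloop e) (hX : IsVertSepBelowThree (M ／ {e}) X) : e ∈ M.closure X := by
  obtain ⟨hXE, hlam, hrX, hrX'⟩ := hX
  obtain ⟨l, hl⟩ := Int.eq_ofNat_of_zero_le (lam_nonneg hXE)
  rw [contract_ground] at hXE hrX'
  have hcX := (r_contractElem_le he hXE).trans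
    (r_le_ncard (M.ground_finite.subset (hXE.trans sdiff_subset)))
  have hcX' : r (M ／ {e}) ((M.E \ {e}) \ X) ≤ (M.E \ X).ncard :=
    ((r_contractElem_le he sdiff_subset).trans
      (r_mono (sdiff_subset_sdiff_left sdiff_subset))).trans (r_le_ncard M.ground_finite.sdiff)
  have hle := hM.le_lam (hXE.trans sdiff_subset) (k := l + 1) (by omega) (by omega) (by omega)
  rw [lam_eq_lam_contractElem he hXE] at hle
  rw [mem_closure_iff_r_insert he.mem_ground]
  have := r_mono (M := M) (subset_insert e X)
  omega

lemma IsVertSepBelowThree.vertThreeSep_of_contractElem (hM : ThreeConnected M)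
    (he : M.IsNonloop e) (hX : IsVertSepBelowThree (M ／ {e}) X) :
    VertThreeSep M X e ((M.E \ {e}) \ X) := by
  have hclX := hX.mem_closure_of_contractElem hM he
  have hclY := hX.compl.mem_closure_of_contractElem hM he
  obtain ⟨hXE, hlam, hrX, hrY⟩ := hX
  rw [contract_ground] at hXE hrY hclY
  have hYE : (M.E \ {e}) \ X ⊆ M.E \ {e} := sdiff_subset
  have hlamX := lam_eq_lam_contractElem he hXE
  have hlamY := lam_eq_lam_contractElem he hYE
  rw [show lam (M ／ {e}) ((M.E \ {e}) \ X) = lam (M ／ {e}) X from lam_compl hXE] at hlamY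
  rw [(mem_closure_iff_r_insert he.mem_ground).1 hclX] at hlamX
  rw [(mem_closure_iff_r_insert he.mem_ground).1 hclY] at hlamY
  have hrX' := r_contractElem he hXE
  have hrY' := r_contractElem he hYE
  rw [(mem_closure_iff_r_insert he.mem_ground).1 hclX] at hrX'
  rw [(mem_closure_iff_r_insert he.mem_ground).1 hclY] at hrY'
  have hcX := r_le_ncard (M := M) (M.ground_finite.subset (hXE.trans sdiff_subset))
  have hcX' : r M ((M.E \ {e}) \ X) ≤ (M.E \ X).ncard :=
    (r_mono (sdiff_subset_sdiff_left sdiff_subset)).trans (r_le_ncard M.ground_finite.sdiff)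
  have h0 := lam_nonneg (M := M ／ {e}) hXE
  have h2 := hM.le_lam (hXE.trans sdiff_subset) (k := 2) le_rfl (by omega) (by omega)
  refine ⟨?_, disjoint_sdiff_right, fun h => (hXE h).2 rfl, fun h => h.1.2 rfl,
    by omega, by omega, hclX, hclY, by omega, by omega⟩
  rw [union_right_comm, union_sdiff_cancel hXE, sdiff_union_of_subset
    (singleton_subset_iff.2 he.mem_ground)]

lemma VertThreeSep.subset_sdiff_singleton {M : Matroid α} {X Y : Set α} {e : α}
    (h : VertThreeSep M X e Y) : X ⊆ M.E \ {e} := fun x hx =>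
  ⟨h.1 ▸ subset_union_left (subset_union_left hx), by rintro rfl; exact h.2.2.1 hx⟩

lemma VertThreeSep.isNonloop (hM : ThreeConnected M) (h : VertThreeSep M X e Y) :
    M.IsNonloop e := by
  have hXE := h.subset_sdiff_singleton
  obtain ⟨hpart, -, -, -, -, -, -, -, hrX, -⟩ := h
  exact hM.isNonloop (hpart ▸ subset_union_left (subset_union_right (mem_singleton e)))
    ((nonempty_of_r_pos (M := M) (by omega)).mono hXE)

lemma VertThreeSep.isVertSepBelowThree_contractElem (he : M.IsNonloop e)
    (h : VertThreeSep M X e Y) : IsVertSepBelowThree (M ／ {e}) X := by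
  have hXE := h.subset_sdiff_singleton
  obtain ⟨hpart, hdisj, heX, heY, hlamX, hlamY, hclX, hclY, hrX, hrY⟩ := h
  have hY : (M ／ {e}).E \ X = Y := by
    rw [contract_ground, ← hpart]
    ext x
    simp only [mem_sdiff, mem_union, mem_singleton_iff]
    have : x ∈ X → x ∉ Y := fun h => disjoint_left.1 hdisj h
    constructor
    · tauto
    · exact fun hx => ⟨⟨Or.inr hx, fun hxe => heY (hxe ▸ hx)⟩, fun hxX => this hxX hx⟩
  have hYE : Y ⊆ M.E \ {e} := hY ▸ sdiff_subset
  have hlam := lam_eq_lam_contractElem he hXE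
  have hrX' := r_contractElem he hXE
  have hrY' := r_contractElem he hYE
  rw [(mem_closure_iff_r_insert he.mem_ground).1 hclX] at hlam hrX'
  rw [(mem_closure_iff_r_insert he.mem_ground).1 hclY] at hrY'
  exact ⟨hXE, by omega, by omega, by rw [hY]; omega⟩

end Contraction

lemma con_eq_contract (M : Matroid α) (C : Set α) : Con M C = M ／ C := rfl

/-- `si(M/e)` is not 3-connected if and only if `M` has a vertical
3-separation `(X, {e}, Y)`. -/
theorem stmt13 (M : Matroid α) [M.Finite] (hM : ThreeConnected M)
    {e : α} (he : e ∈ M.E) :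
    (∀ N, SimplificationOf (Con M {e}) N → ¬ ThreeConnected N) ↔
      ∃ X Y, VertThreeSep M X e Y := by
  rw [con_eq_contract]
  constructor
  · intro h
    obtain ⟨N, hN⟩ := exists_simplificationOf (M ／ {e})
    obtain ⟨A, hA⟩ := hN.exists_isVertSepBelowThree (h N hN)
    have hX := hN.isVertSepBelowThree_closure hA
    exact ⟨_, _, hX.vertThreeSep_of_contractElem hM (hM.isNonloop he (hX.nonempty.mono hX.1))⟩
  · rintro ⟨X, Y, hXY⟩ N hN
    have := hN.finite
    exact (hN.isVertSepBelowThree_inter_closure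
      (hXY.isVertSepBelowThree_contractElem (hXY.isNonloop hM))).not_threeConnected
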